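/- For every k ≥ 1, the following identity holds in ℚ[[y]]: ( ∑_{n≥0} (−1)^n binom(n+k−1, n) y^n/n! ) · ( ∑_{n≥0} |Ninc_n^{[k]}| y^n/n! ) = 1. -/

import Mathlib

/-!
For `n ≥ 1` the `n`-th coefficient of the product, times `n!`, is
`∑ⱼ (-1)ʲ C(n, j) C(j + k - 1, j) |Ninc_{n-j}^{[k]}|`. Its `j`-th term counts the colored
permutations of `[n]` whose first `j` letters rise in both value and color and whose remaining
letters have no ascent: choose the `j` values of the prefix, a weakly increasing coloring of
them (stars and bars), and an ascent-free colored permutation of the remaining `n - j` values.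
The ascent set of such a word is `[0, j - 1)` or `[0, j)`, so after grouping the words by their
ascent set the alternating sum telescopes to `(-1)ⁿ` times the number of words with ascent set
`[0, n)`, and there are none.
-/

/-- An ascent of the colored permutation `(σ, c)`. -/
def HasAscent {n : ℕ} {C : Type*} [Preorder C] (σ : Equiv.Perm (Fin n)) (c : Fin n → C) : Prop :=
  ∃ i : ℕ, ∃ h : i + 1 < n,
    σ ⟨i, Nat.lt_of_succ_lt h⟩ < σ ⟨i + 1, h⟩ ∧
      c (σ ⟨i, Nat.lt_of_succ_lt h⟩) ≤ c (σ ⟨i + 1, h⟩)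

/-- `|Ninc_n^{[k]}|`: the number of ascent-free colored permutations of `[n]` with colors
in `Fin k`. -/
noncomputable def nincCount (n k : ℕ) : ℕ :=
  Nat.card {w : Equiv.Perm (Fin n) × (Fin n → Fin k) // ¬ HasAscent w.1 w.2}

open Finset Function Equiv

section Ascents

variable {n : ℕ} {α β : Type*} [Preorder α] [Preorder β]

/-- `κ` colors positions rather than values: the colored permutation `(σ, c)` is the word
`(σ, c ∘ σ)`. -/
def ascentSet (u : Fin n → α) (κ : Fin n → β) : Set ℕ :=
  {i | ∃ h : i + 1 < n, u ⟨i, Nat.lt_of_succ_lt h⟩ < u ⟨i + 1, h⟩ ∧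
    κ ⟨i, Nat.lt_of_succ_lt h⟩ ≤ κ ⟨i + 1, h⟩}

theorem hasAscent_iff_ascentSet_nonempty {C : Type*} [Preorder C] (σ : Perm (Fin n))
    (c : Fin n → C) : HasAscent σ c ↔ (ascentSet σ (c ∘ σ)).Nonempty :=
  Iff.rfl

theorem ascentSet_comp_orderEmbedding {α' : Type*} [Preorder α'] (f : α ↪o α')
    (u : Fin n → α) (κ : Fin n → β) : ascentSet (f ∘ u) κ = ascentSet u κ := by
  ext i
  simp [ascentSet]

theorem ascentSet_ne_Iio_self (hn : n ≠ 0) (u : Fin n → α) (κ : Fin n → β) :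
    ascentSet u κ ≠ Set.Iio n := by
  intro h
  obtain ⟨h', -⟩ : n - 1 ∈ ascentSet u κ := h ▸ Set.mem_Iio.mpr (by omega)
  omega

/-- The first `j` letters rise and the remaining ones have no ascent; the truncation of `j - 1`
at `j = 0` is harmless. -/
def IsCutAt (j : ℕ) (u : Fin n → α) (κ : Fin n → β) : Prop :=
  Set.Iio (j - 1) ⊆ ascentSet u κ ∧ ascentSet u κ ⊆ Set.Iio j

theorem isCutAt_zero_iff {u : Fin n → α} {κ : Fin n → β} :
    IsCutAt 0 u κ ↔ ascentSet u κ = Set.Iio 0 := by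
  simp [IsCutAt, Set.subset_empty_iff]

theorem isCutAt_succ_iff {j : ℕ} {u : Fin n → α} {κ : Fin n → β} :
    IsCutAt (j + 1) u κ ↔ ascentSet u κ = Set.Iio j ∨ ascentSet u κ = Set.Iio (j + 1) := by
  simp only [IsCutAt, Nat.add_sub_cancel, Set.ext_iff, Set.subset_def, Set.mem_Iio]
  constructor
  · rintro ⟨hlow, hhigh⟩
    by_cases hj : j ∈ ascentSet u κ
    · exact .inr fun i => ⟨hhigh i, fun hi => by grind⟩
    · exact .inl fun i => ⟨fun hi => by grind, hlow i⟩
  · rintro (h | h) <;> exact ⟨fun i hi => (h i).mpr (by omega), fun i hi => by grind⟩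

end Ascents

theorem sum_range_neg_one_pow_mul_eq_of_eq_add {R : Type*} [CommRing R] (c e : ℕ → R)
    (hc₀ : c 0 = e 0) (hc : ∀ j, c (j + 1) = e j + e (j + 1)) (n : ℕ) :
    ∑ j ∈ range (n + 1), (-1) ^ j * c j = (-1) ^ n * e n := by
  induction n with
  | zero => simp [hc₀]
  | succ n ih => rw [sum_range_succ, ih, hc]; ring

theorem sum_neg_one_pow_mul_card_isCutAt (n k : ℕ) :
    ∑ j ∈ range (n + 1),
      (-1 : ℤ) ^ j * Nat.card {w : Perm (Fin n) × (Fin n → Fin k) // IsCutAt j w.1 w.2} =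
      if n = 0 then 1 else 0 := by
  classical
  set e : ℕ → ℤ := fun i =>
    Nat.card {w : Perm (Fin n) × (Fin n → Fin k) // ascentSet w.1 w.2 = Set.Iio i}
  rw [sum_range_neg_one_pow_mul_eq_of_eq_add _ e]
  · rcases eq_or_ne n 0 with rfl | hn
    · have : Unique {w : Perm (Fin 0) × (Fin 0 → Fin k) // ascentSet w.1 w.2 = Set.Iio 0} :=
        ⟨⟨⟨(1, finZeroElim), by ext i; simp [ascentSet]⟩⟩,
          fun _ => Subsingleton.elim _ _⟩
      simp only [e, Nat.card_unique]
      norm_num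
    · have : IsEmpty {w : Perm (Fin n) × (Fin n → Fin k) // ascentSet w.1 w.2 = Set.Iio n} :=
        ⟨fun w => ascentSet_ne_Iio_self hn _ _ w.2⟩
      simp [e, hn]
  · simp only [e, isCutAt_zero_iff]
  · intro j
    simp only [e, isCutAt_succ_iff, Nat.card_eq_fintype_card]
    rw [Fintype.card_subtype_or_disjoint]
    · push_cast
      rfl
    · intro p hp hq w hw
      have := (hp w hw).symm.trans (hq w hw)
      exact absurd (Set.ext_iff.mp this j) (by simp)

section Split

variable {j m : ℕ} {α β : Type*} [Preorder α] [Preorder β]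

theorem Fin.strictMono_iff_forall_lt_add_one {f : Fin m → α} :
    StrictMono f ↔ ∀ i (h : i + 1 < m), f ⟨i, Nat.lt_of_succ_lt h⟩ < f ⟨i + 1, h⟩ := by
  cases m with
  | zero => simp [Subsingleton.strictMono]
  | succ m =>
    exact Fin.strictMono_iff_lt_succ.trans
      ⟨fun h i hi => h ⟨i, by omega⟩, fun h i => h i (by omega)⟩

theorem Fin.monotone_iff_forall_le_add_one {f : Fin m → α} :
    Monotone f ↔ ∀ i (h : i + 1 < m), f ⟨i, Nat.lt_of_succ_lt h⟩ ≤ f ⟨i + 1, h⟩ := by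
  cases m with
  | zero => simp [Subsingleton.monotone]
  | succ m =>
    exact Fin.monotone_iff_le_succ.trans
      ⟨fun h i hi => h ⟨i, by omega⟩, fun h i => h i (by omega)⟩

theorem Fin.append_comp_castAdd {γ : Type*} (u : Fin j → γ) (v : Fin m → γ) :
    Fin.append u v ∘ Fin.castAdd m = u :=
  funext (Fin.append_left u v)

theorem Fin.append_comp_natAdd {γ : Type*} (u : Fin j → γ) (v : Fin m → γ) :
    Fin.append u v ∘ Fin.natAdd j = v :=
  funext (Fin.append_right u v)

theorem Iio_pred_subset_ascentSet_iff (u : Fin (j + m) → α) (κ : Fin (j + m) → β) :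
    Set.Iio (j - 1) ⊆ ascentSet u κ ↔
      StrictMono (u ∘ Fin.castAdd m) ∧ Monotone (κ ∘ Fin.castAdd m) := by
  simp only [Fin.strictMono_iff_forall_lt_add_one, Fin.monotone_iff_forall_le_add_one,
    ← forall₂_and, Set.subset_def, Set.mem_Iio]
  exact forall_congr' fun i =>
    ⟨fun h hi => (h (by omega)).2, fun h hi => ⟨by omega, h (by omega)⟩⟩

theorem mem_ascentSet_comp_natAdd {u : Fin (j + m) → α} {κ : Fin (j + m) → β} {i : ℕ} :
    i ∈ ascentSet (u ∘ Fin.natAdd j) (κ ∘ Fin.natAdd j) ↔ j + i ∈ ascentSet u κ :=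
  ⟨fun ⟨_, h⟩ => ⟨by omega, h⟩, fun ⟨_, h⟩ => ⟨by omega, h⟩⟩

theorem ascentSet_subset_Iio_iff (u : Fin (j + m) → α) (κ : Fin (j + m) → β) :
    ascentSet u κ ⊆ Set.Iio j ↔
      ascentSet (u ∘ Fin.natAdd j) (κ ∘ Fin.natAdd j) = ∅ := by
  simp only [Set.eq_empty_iff_forall_notMem, mem_ascentSet_comp_natAdd]
  refine ⟨fun h i hi => by simpa using h hi, fun h i hi => ?_⟩
  by_contra hij
  obtain ⟨i, rfl⟩ := Nat.exists_eq_add_of_le (not_lt.mp hij)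
  exact h i hi

theorem isCutAt_iff (u : Fin (j + m) → α) (κ : Fin (j + m) → β) :
    IsCutAt j u κ ↔ (StrictMono (u ∘ Fin.castAdd m) ∧ Monotone (κ ∘ Fin.castAdd m)) ∧
      ascentSet (u ∘ Fin.natAdd j) (κ ∘ Fin.natAdd j) = ∅ := by
  rw [IsCutAt, Iio_pred_subset_ascentSet_iff, ascentSet_subset_Iio_iff]

end Split

section Shuffle

variable {j m : ℕ}

theorem card_compl_eq_of_card_eq {S : Finset (Fin (j + m))} (hS : #S = j) : #Sᶜ = m := by
  rw [card_compl, hS, Fintype.card_fin, Nat.add_sub_cancel_left]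

noncomputable def shufflePerm (S : Finset (Fin (j + m))) (hS : #S = j) (π : Perm (Fin m)) :
    Perm (Fin (j + m)) :=
  .ofBijective
    (Fin.append (S.orderEmbOfFin hS) (Sᶜ.orderEmbOfFin (card_compl_eq_of_card_eq hS) ∘ π)) <|
    Finite.injective_iff_bijective.mp <| Fin.append_injective_iff.mpr
      ⟨(S.orderEmbOfFin hS).injective, (Sᶜ.orderEmbOfFin _).injective.comp π.injective,
        fun a b h =>
          mem_compl.mp (Sᶜ.orderEmbOfFin_mem _ (π b)) (h ▸ S.orderEmbOfFin_mem hS a)⟩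

theorem shufflePerm_comp_castAdd (S : Finset (Fin (j + m))) (hS : #S = j) (π : Perm (Fin m)) :
    shufflePerm S hS π ∘ Fin.castAdd m = S.orderEmbOfFin hS := by
  ext i : 1
  simp [shufflePerm]

theorem shufflePerm_comp_natAdd (S : Finset (Fin (j + m))) (hS : #S = j) (π : Perm (Fin m)) :
    shufflePerm S hS π ∘ Fin.natAdd j =
      Sᶜ.orderEmbOfFin (card_compl_eq_of_card_eq hS) ∘ π := by
  ext i : 1
  simp [shufflePerm]

theorem shufflePerm_injective {S S' : Finset (Fin (j + m))} {hS : #S = j} {hS' : #S' = j}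
    {π π' : Perm (Fin m)} (h : shufflePerm S hS π = shufflePerm S' hS' π') :
    S = S' ∧ π = π' := by
  have hS : S = S' := by
    rw [← coe_inj, ← range_orderEmbOfFin S hS, ← range_orderEmbOfFin S' hS']
    rw [← shufflePerm_comp_castAdd S hS π, ← shufflePerm_comp_castAdd S' hS' π', h]
  subst hS
  have hsuf := congr(⇑$h ∘ Fin.natAdd j)
  rw [shufflePerm_comp_natAdd, shufflePerm_comp_natAdd] at hsuf
  exact ⟨rfl, Equiv.ext fun i => (Sᶜ.orderEmbOfFin _).injective (congrFun hsuf i)⟩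

theorem exists_shufflePerm_eq (σ : Perm (Fin (j + m))) (hσ : StrictMono (σ ∘ Fin.castAdd m)) :
    ∃ S hS π, shufflePerm S hS π = σ := by
  set S := univ.image (σ ∘ Fin.castAdd m)
  have hS : #S = j := by
    rw [card_image_of_injective _ (σ.injective.comp (Fin.castAdd_injective j m)), card_fin]
  have hpre : σ ∘ Fin.castAdd m = S.orderEmbOfFin hS :=
    orderEmbOfFin_unique hS (fun i => mem_image_of_mem _ (mem_univ i)) hσ
  have hsuf (i : Fin m) : σ (Fin.natAdd j i) ∈ Sᶜ := by
    simp only [S, mem_compl, mem_image, mem_univ, true_and, comp_apply, σ.injective.eq_iff]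
    rintro ⟨a, ha⟩
    have := congr(Fin.val $ha)
    simp only [Fin.val_castAdd, Fin.val_natAdd] at this
    omega
  set e := Sᶜ.orderIsoOfFin (card_compl_eq_of_card_eq hS)
  let π : Perm (Fin m) := .ofBijective (fun i => e.symm ⟨σ (Fin.natAdd j i), hsuf i⟩) <|
    Finite.injective_iff_bijective.mp fun a b h => by
      simpa [σ.injective.eq_iff, Fin.natAdd_inj] using h
  refine ⟨S, hS, π, Equiv.ext fun i => ?_⟩
  refine Fin.addCases (fun i => ?_) (fun i => ?_) i
  · simpa [← shufflePerm_comp_castAdd S hS π] using congr_fun hpre.symm i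
  · rw [← comp_apply (f := shufflePerm S hS π), shufflePerm_comp_natAdd, comp_apply,
      ← coe_orderIsoOfFin_apply]
    simp [π, e]

end Shuffle

section StarsAndBars

variable {j k N : ℕ}

theorem Fin.monotone_iff_strictMono_add_val {u : Fin j → ℕ} :
    Monotone u ↔ StrictMono fun i => u i + i := by
  rw [Fin.monotone_iff_forall_le_add_one, Fin.strictMono_iff_forall_lt_add_one]
  exact forall₂_congr fun i hi => by simp only; omega

theorem Fin.val_le_of_strictMono {v : Fin j → Fin N} (hv : StrictMono v) (i : Fin j) :
    (i : ℕ) ≤ v i := by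
  obtain ⟨i, hi⟩ := i
  induction i with
  | zero => exact Nat.zero_le _
  | succ i ih =>
    have h₁ : v ⟨i, by omega⟩ < v ⟨i + 1, hi⟩ := hv (Fin.mk_lt_mk.mpr i.lt_succ_self)
    have h₂ := ih (by omega)
    simp only [Fin.lt_def] at *
    omega

theorem Fin.monotone_val_sub_of_strictMono {v : Fin j → Fin N} (hv : StrictMono v) :
    Monotone fun i => (v i : ℕ) - i := by
  rw [Fin.monotone_iff_strictMono_add_val]
  convert (Fin.val_strictMono.comp hv : StrictMono fun i => (v i : ℕ)) using 2 with i
  exact Nat.sub_add_cancel (Fin.val_le_of_strictMono hv i)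

theorem Fin.val_sub_lt_of_strictMono {v : Fin j → Fin (j + k - 1)} (hv : StrictMono v)
    (i : Fin j) : (v i : ℕ) - i < k := by
  have hi := i.isLt
  have hlast : i ≤ ⟨j - 1, by omega⟩ := Fin.mk_le_mk.mpr (by omega)
  have h₁ := Fin.monotone_val_sub_of_strictMono hv hlast
  have h₂ := Fin.val_le_of_strictMono hv ⟨j - 1, by omega⟩
  have h₃ := (v ⟨j - 1, by omega⟩).isLt
  simp only at h₁ h₂
  omega

def Fin.orderHomEquivOrderEmbedding : (Fin j →o Fin k) ≃ (Fin j ↪o Fin (j + k - 1)) where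
  toFun g := .ofStrictMono (fun i => ⟨g i + i, by have := (g i).isLt; omega⟩) fun a b h =>
    Fin.monotone_iff_strictMono_add_val.mp (Fin.val_strictMono.monotone.comp g.monotone) h
  invFun e := ⟨fun i => ⟨e i - i, Fin.val_sub_lt_of_strictMono e.strictMono i⟩,
    fun a b h => Fin.mk_le_mk.mpr (Fin.monotone_val_sub_of_strictMono e.strictMono h)⟩
  left_inv g := by ext i; exact Nat.add_sub_cancel (g i) i
  right_inv e := by ext i; exact Nat.sub_add_cancel (Fin.val_le_of_strictMono e.strictMono i)

theorem Fin.card_orderHom : Nat.card (Fin j →o Fin k) = (j + k - 1).choose j := by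
  rw [Nat.card_congr (Fin.orderHomEquivOrderEmbedding.trans Set.powersetCard.ofFinEmbEquiv),
    Set.powersetCard.card, Nat.card_eq_fintype_card, Fintype.card_fin]

end StarsAndBars

theorem nincCount_eq_card (n k : ℕ) :
    nincCount n k = Nat.card {w : Perm (Fin n) × (Fin n → Fin k) // ascentSet w.1 w.2 = ∅} :=
  Nat.card_congr <| .subtypeEquiv (.prodCongrRight fun σ => σ.symm.arrowCongr (.refl _)) fun w =>
    (not_congr (hasAscent_iff_ascentSet_nonempty w.1 w.2)).trans Set.not_nonempty_iff_eq_empty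

section CutCount

variable {j m k : ℕ}

/-- A word cut at `j`, recorded as the value set of its first `j` letters, their colors, and its
remaining letters relabelled order-preservingly by `Fin m`. -/
abbrev CutData (j m k : ℕ) :=
  {S : Finset (Fin (j + m)) // #S = j} × (Fin j →o Fin k) ×
    {w : Perm (Fin m) × (Fin m → Fin k) // ascentSet w.1 w.2 = ∅}

noncomputable def CutData.word (p : CutData j m k) :
    Perm (Fin (j + m)) × (Fin (j + m) → Fin k) :=
  (shufflePerm p.1.1 p.1.2 p.2.2.1.1, Fin.append p.2.1 p.2.2.1.2)

theorem CutData.isCutAt_word (p : CutData j m k) : IsCutAt j p.word.1 p.word.2 := by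
  obtain ⟨⟨S, hS⟩, g, ⟨π, d⟩, hπd⟩ := p
  rw [word, isCutAt_iff]
  dsimp only
  rw [shufflePerm_comp_castAdd, shufflePerm_comp_natAdd, ascentSet_comp_orderEmbedding,
    Fin.append_comp_castAdd, Fin.append_comp_natAdd]
  exact ⟨⟨(S.orderEmbOfFin hS).strictMono, g.monotone⟩, hπd⟩

theorem CutData.word_injective : Function.Injective (word : CutData j m k → _) := by
  rintro ⟨⟨S, hS⟩, g, ⟨π, d⟩, hw⟩ ⟨⟨S', hS'⟩, g', ⟨π', d'⟩, hw'⟩ h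
  obtain ⟨rfl, rfl⟩ := shufflePerm_injective congr(Prod.fst $h)
  have hκ : Fin.append ⇑g d = Fin.append ⇑g' d' := congr(Prod.snd $h)
  have hg := congr($hκ ∘ Fin.castAdd m)
  have hd := congr($hκ ∘ Fin.natAdd j)
  rw [Fin.append_comp_castAdd, Fin.append_comp_castAdd] at hg
  rw [Fin.append_comp_natAdd, Fin.append_comp_natAdd] at hd
  obtain rfl := OrderHom.ext _ _ hg
  subst hd
  rfl

theorem CutData.exists_word_eq (w : Perm (Fin (j + m)) × (Fin (j + m) → Fin k))
    (hw : IsCutAt j w.1 w.2) : ∃ p : CutData j m k, p.word = w := by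
  obtain ⟨σ, κ⟩ := w
  obtain ⟨⟨hσ, hκ⟩, hsuf⟩ := (isCutAt_iff σ κ).mp hw
  obtain ⟨S, hS, π, rfl⟩ := exists_shufflePerm_eq σ hσ
  rw [shufflePerm_comp_natAdd, ascentSet_comp_orderEmbedding] at hsuf
  exact ⟨(⟨S, hS⟩, ⟨_, hκ⟩, ⟨(π, _), hsuf⟩), Prod.ext rfl Fin.append_castAdd_natAdd⟩

theorem CutData.card :
    Nat.card (CutData j m k) = (j + m).choose j * ((j + k - 1).choose j * nincCount m k) := by
  rw [Nat.card_prod, Nat.card_prod, Fin.card_orderHom, nincCount_eq_card]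
  congr
  exact (Set.powersetCard.card _ _).trans (by rw [Nat.card_fin])

end CutCount

theorem card_isCutAt {j n : ℕ} (k : ℕ) (hj : j ≤ n) :
    Nat.card {w : Perm (Fin n) × (Fin n → Fin k) // IsCutAt j w.1 w.2} =
      n.choose j * ((j + k - 1).choose j * nincCount (n - j) k) := by
  obtain ⟨m, rfl⟩ := Nat.exists_eq_add_of_le hj
  rw [Nat.add_sub_cancel_left, ← CutData.card]
  symm
  refine Nat.card_eq_of_bijective (fun p => ⟨p.word, p.isCutAt_word⟩)
    ⟨fun p q h => CutData.word_injective congr(Subtype.val $h), fun w => ?_⟩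
  obtain ⟨p, hp⟩ := CutData.exists_word_eq w.1 w.2
  exact ⟨p, Subtype.ext hp⟩

theorem PowerSeries.coeff_mk_div_factorial_mul_mk_div_factorial {K : Type*} [Field K] [CharZero K]
    (a b : ℕ → K) (n : ℕ) :
    coeff n (mk (fun i => a i / i.factorial) * mk (fun i => b i / i.factorial)) =
      (∑ j ∈ range (n + 1), n.choose j * a j * b (n - j)) / n.factorial := by
  rw [coeff_mul, Nat.sum_antidiagonal_eq_sum_range_succ_mk, sum_div]
  refine sum_congr rfl fun j hj => ?_
  rw [coeff_mk, coeff_mk, Nat.cast_choose K (mem_range_succ_iff.mp hj)]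
  field_simp
  exact (mul_div_mul_right _ _ (Nat.cast_ne_zero.mpr n.factorial_ne_zero)).symm

theorem ninc_egf_multiplicative_inverse_general (k : ℕ) :
    (PowerSeries.mk fun n =>
        ((-1 : ℚ) ^ n * (Nat.choose (n + k - 1) n : ℚ)) / (Nat.factorial n : ℚ)) *
      (PowerSeries.mk fun n => (nincCount n k : ℚ) / (Nat.factorial n : ℚ)) = 1 := by
  ext n
  rw [PowerSeries.coeff_mk_div_factorial_mul_mk_div_factorial, PowerSeries.coeff_one]
  have hsum : ∑ j ∈ range (n + 1),
      (n.choose j : ℚ) * ((-1) ^ j * (j + k - 1).choose j) * nincCount (n - j) k =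
      ((∑ j ∈ range (n + 1), (-1 : ℤ) ^ j *
        Nat.card {w : Perm (Fin n) × (Fin n → Fin k) // IsCutAt j w.1 w.2} : ℤ) : ℚ) := by
    push_cast
    refine sum_congr rfl fun j hj => ?_
    rw [card_isCutAt k (mem_range_succ_iff.mp hj)]
    push_cast
    ring
  rw [hsum, sum_neg_one_pow_mul_card_isCutAt]
  split_ifs with hn <;> simp [hn]

theorem ninc_egf_multiplicative_inverse (k : ℕ) (hk : 1 ≤ k) :
    (PowerSeries.mk fun n =>
        ((-1 : ℚ) ^ n * (Nat.choose (n + k - 1) n : ℚ)) / (Nat.factorial n : ℚ)) *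
      (PowerSeries.mk fun n => (nincCount n k : ℚ) / (Nat.factorial n : ℚ)) = 1 :=
  ninc_egf_multiplicative_inverse_general k
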